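/- arXiv:1701.05729 — 2 statements merged into one kernel-verified Lean document; each statement's English description precedes it below -/
import Mathlib

section
/- Let a > 1 be a real number and let f, g ∈ K[[z]] be power series, each convergent on the closed disc D(a) = {z ∈ K : |z| ≤ a} (i.e. with coefficients c_m satisfying |c_m| a^m → 0), and with g not the zero power series. Suppose there exist an integer n ≥ 1 and elements a_{ij} ∈ K for 1 ≤ i ≤ n and 0 ≤ j < M such that the identity f(z+M)/g(z+M) − f(z)/g(z) = Σ_{1 ≤ i ≤ n, 0 ≤ j < M} a_{ij}/(z+j)^i holds for infinitely many z ∈ D(a) at which all terms are defined (i.e. g(z) ≠ 0, g(z+M) ≠ 0, and z ∉ {0, −1, …, −(M−1)}). Then a_{ij} = 0 for all i, j, and f/g is constant: there exists c ∈ K with f(z) = c·g(z) for all z ∈ D(a) with g(z) ≠ 0. -/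
open Filter

noncomputable section

variable {K : Type*}

/-- Evaluation of the power series with coefficients `c` at the point `x`, as a `tsum`. -/
def evalPS [NormedField K] (c : ℕ → K) (x : K) : K := ∑' m, c m * x ^ m

/-- The power series with coefficients `c` converges on the closed disc of radius `r`,
i.e. `‖c m‖ * r ^ m → 0`. -/
def PSConvOn [NormedField K] (c : ℕ → K) (r : ℝ) : Prop :=
  Filter.Tendsto (fun m => ‖c m‖ * r ^ m) Filter.atTop (nhds 0)

/-- `f`, regarded as a function on `{n : ℕ // n₀ ≤ n}`, is an `M`-power series function:
for every `i` with `0 < i ≤ pM` there is a power series `cᵢ` converging on a closed disc of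
radius `rᵢ > |p| = 1/p` such that `f a = cᵢ (a - i)` for all `a ≥ n₀` with `pM ∣ a - i`. -/
def IsMPSF (p M n₀ : ℕ) [NormedField K] (f : ℕ → K) : Prop :=
  ∀ i : ℕ, 0 < i → i ≤ p * M →
    ∃ (r : ℝ) (c : ℕ → K), (p : ℝ)⁻¹ < r ∧ PSConvOn c r ∧
      ∀ a : ℕ, n₀ ≤ a → ((p : ℤ) * M) ∣ ((a : ℤ) - (i : ℤ)) →
        f a = evalPS c ((a : K) - (i : K))

/-!
Functions on the closed disc `‖z‖ ≤ a` given by convergent power series form a ring that is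
stable under translation by points of the disc: in an ultrametric field a series can be
re-expanded around any point of the disc without shrinking its domain of convergence.
Re-expanding around an accumulation point (which exists because `K` is locally compact) and
using isolated zeros shows that such a function vanishing on an infinite subset of the disc
vanishes on the whole disc; in particular these functions behave like an integral domain.

Clearing denominators turns the hypothesis into an identity
`(F(z+M) G(z) - F(z) G(z+M)) P(z) = G(z) G(z+M) Q(z)` on the disc, with `P = ∏ⱼ (z+j)ⁿ`.
Iterating it `k` times expresses `F/G (z+kM) - F/G (z)` as `∑_{l<k} Q/P (z+lM)`, whose pole at
`-j₀` cannot cancel. Evaluated at a point `-j₀ - RM` of the lattice `-j₀ + ℤM` where `G` has no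
zero (only finitely many lattice points are zeros of `G`), the cleared `2R`-step identity forces
the top-order coefficients `A n j₀` to vanish, and induction on `n` kills all of them. Then `F/G`
is `M`-periodic, so `F - (F/G)(z₁) G` vanishes at the infinitely many points `z₁ + kM`, hence on
the whole disc.
-/

open Topology

instance IsUltrametricDist.nonarchimedeanRing {R : Type*} [NormedRing R] [IsUltrametricDist R] :
    NonarchimedeanRing R where
  is_nonarchimedean := NonarchimedeanAddGroup.is_nonarchimedean

theorem tendsto_add_cofinite_atTop : Tendsto (fun p : ℕ × ℕ => p.1 + p.2) cofinite atTop := by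
  refine tendsto_atTop.2 fun N => eventually_cofinite.2 <|
    ((Set.finite_Iio N).prod (Set.finite_Iio N)).subset fun p hp => ?_
  simp only [Set.mem_ofPred_eq, Set.mem_prod, Set.mem_Iio] at hp ⊢
  omega

theorem fun_prod_mem {α ι R : Type*} [CommRing R] (T : Subring (α → R)) (s : Finset ι)
    {f : ι → α → R} (hf : ∀ i ∈ s, f i ∈ T) : (fun z => ∏ i ∈ s, f i z) ∈ T :=
  Finset.prod_fn s f ▸ prod_mem hf

theorem fun_sum_mem {α ι R : Type*} [CommRing R] (T : Subring (α → R)) (s : Finset ι)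
    {f : ι → α → R} (hf : ∀ i ∈ s, f i ∈ T) : (fun z => ∑ i ∈ s, f i z) ∈ T :=
  Finset.sum_fn s f ▸ sum_mem hf

/-- With `x l = F (z + l t)`, `g l = G (z + l t)`, `p l = P (z + l t)`, `q l = Q (z + l t)`, this is
the cleared form of `F/G (z + k t) - F/G (z) = ∑_{l<k} Q/P (z + l t)`. -/
theorem prod_mul_telescope_eq_zero {R : Type*} [CommRing R] (x g p q : ℕ → R)
    (h : ∀ l, (x (l + 1) * g l - x l * g (l + 1)) * p l = g l * g (l + 1) * q l) (k : ℕ) :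
    (∏ l ∈ Finset.range k, g l) * ((x k * g 0 - x 0 * g k) * ∏ l ∈ Finset.range k, p l -
      g 0 * g k * ∑ l ∈ Finset.range k, q l * ∏ l' ∈ (Finset.range k).erase l, p l') = 0 := by
  open Finset in
  induction k with
  | zero => simp
  | succ k ih =>
    have hsum : ∑ l ∈ range (k + 1), q l * ∏ l' ∈ (range (k + 1)).erase l, p l' =
        (∑ l ∈ range k, q l * ∏ l' ∈ (range k).erase l, p l') * p k +
          q k * ∏ l ∈ range k, p l := by
      rw [sum_range_succ, range_add_one, erase_insert notMem_range_self, sum_mul]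
      congr 1
      refine sum_congr rfl fun l hl => ?_
      rw [erase_insert_of_ne (mem_range.mp hl).ne.symm, prod_insert (by simp)]
      ring
    rw [hsum, prod_range_succ, prod_range_succ]
    linear_combination (g (k + 1) * p k) * ih +
      ((∏ l ∈ range k, g l) * g 0 * ∏ l ∈ range k, p l) * h k

section Coefficients
variable [NormedField K] {a : ℝ} {c : ℕ → K}

theorem psConvOn_iff_isRestricted : PSConvOn c a ↔ PowerSeries.IsRestricted a (.mk c) := by
  simp [PSConvOn, PowerSeries.isRestricted_iff']

theorem psConvOn_polynomial (P : Polynomial K) : PSConvOn (fun m => P.coeff m) a := by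
  refine tendsto_const_nhds.congr' ?_
  filter_upwards [eventually_gt_atTop P.natDegree] with m hm
  simp [Polynomial.coeff_eq_zero_of_natDegree_lt hm]

theorem evalPS_polynomial (P : Polynomial K) (x : K) :
    evalPS (fun m => P.coeff m) x = P.eval x := by
  rw [evalPS, tsum_eq_sum (s := Finset.range (P.natDegree + 1)), Polynomial.eval_eq_sum_range]
  intro m hm
  simp [Polynomial.coeff_eq_zero_of_natDegree_lt (by simpa using hm)]

/-- The coefficients of the expansion of `evalPS c` around `x`. -/
def recenter (c : ℕ → K) (x : K) (k : ℕ) : K :=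
  ∑' j, ((k + j).choose k : K) * c (k + j) * x ^ j

end Coefficients

section Ultrametric
variable [NormedField K] [IsUltrametricDist K] {a : ℝ} {c : ℕ → K}

theorem norm_add_le_of_norm_le {x y : K} (hx : ‖x‖ ≤ a) (hy : ‖y‖ ≤ a) : ‖x + y‖ ≤ a :=
  (IsUltrametricDist.norm_add_le_max x y).trans (max_le hx hy)

theorem norm_sub_le_of_norm_le {x y : K} (hx : ‖x‖ ≤ a) (hy : ‖y‖ ≤ a) : ‖x - y‖ ≤ a := by
  rw [sub_eq_add_neg]
  exact norm_add_le_of_norm_le hx (by rwa [norm_neg])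

theorem norm_natCast_mul_le {t : K} (ht : ‖t‖ ≤ a) (n : ℕ) : ‖(n : K) * t‖ ≤ a := by
  rw [norm_mul]
  nlinarith [IsUltrametricDist.norm_natCast_le_one K n, norm_nonneg t, norm_nonneg (n : K)]

theorem psConvOn_recenter (hc : PSConvOn c a) (ha : 0 < a) {x : K} (hx : ‖x‖ ≤ a) :
    PSConvOn (recenter c x) a := by
  rw [PSConvOn, Metric.tendsto_atTop]
  intro ε hε
  obtain ⟨N, hN⟩ := Metric.tendsto_atTop.mp hc (ε / 2) (half_pos hε)
  refine ⟨N, fun k hk => ?_⟩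
  have hak : 0 < a ^ k := pow_pos ha k
  have hbound : ‖recenter c x k‖ ≤ ε / 2 / a ^ k := by
    refine IsUltrametricDist.norm_tsum_le_of_forall_le_of_nonneg (by positivity) fun j => ?_
    have hcj := hN (k + j) (by omega)
    rw [Real.dist_0_eq_abs, abs_of_nonneg (by positivity), pow_add] at hcj
    rw [le_div_iff₀ hak, norm_mul, norm_mul, norm_pow]
    calc ‖((k + j).choose k : K)‖ * ‖c (k + j)‖ * ‖x‖ ^ j * a ^ k
        ≤ 1 * ‖c (k + j)‖ * a ^ j * a ^ k := by
          gcongr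
          exact IsUltrametricDist.norm_natCast_le_one K _
      _ ≤ ε / 2 := by nlinarith
  rw [Real.dist_0_eq_abs, abs_of_nonneg (by positivity)]
  calc _ ≤ ε / 2 / a ^ k * a ^ k := by gcongr
    _ < ε := by rw [div_mul_cancel₀ _ hak.ne']; linarith

end Ultrametric

section Evaluation
variable [NormedField K] [IsUltrametricDist K] [CompleteSpace K] {a : ℝ} {c d : ℕ → K}

theorem PSConvOn.summable (hc : PSConvOn c a) {x : K} (hx : ‖x‖ ≤ a) :
    Summable fun m => c m * x ^ m := by
  refine NonarchimedeanAddGroup.summable_of_tendsto_cofinite_zero ?_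
  rw [Nat.cofinite_eq_atTop]
  exact squeeze_zero_norm (fun m => by rw [norm_mul, norm_pow]; gcongr) hc

theorem evalPS_add (hc : PSConvOn c a) (hd : PSConvOn d a) {x : K} (hx : ‖x‖ ≤ a) :
    evalPS (c + d) x = evalPS c x + evalPS d x := by
  simp only [evalPS, Pi.add_apply, add_mul]
  exact (hc.summable hx).tsum_add (hd.summable hx)

theorem evalPS_mul (hc : PSConvOn c a) (hd : PSConvOn d a) {x : K} (hx : ‖x‖ ≤ a) :
    evalPS (fun m => PowerSeries.coeff m (.mk c * .mk d)) x = evalPS c x * evalPS d x := by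
  have hcx := hc.summable hx
  have hdx := hd.summable hx
  have hprod : Summable fun p : ℕ × ℕ => c p.1 * x ^ p.1 * (d p.2 * x ^ p.2) :=
    Summable.mul_of_nonarchimedean (f := fun m => c m * x ^ m) (g := fun m => d m * x ^ m) hcx hdx
  simp only [evalPS]
  rw [hcx.tsum_mul_tsum_eq_tsum_sum_antidiagonal hdx hprod]
  refine tsum_congr fun m => ?_
  rw [PowerSeries.coeff_mul, Finset.sum_mul]
  refine Finset.sum_congr rfl fun p hp => ?_
  rw [← Finset.HasAntidiagonal.mem_antidiagonal.mp hp, pow_add]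
  simp only [PowerSeries.coeff_mk]
  ring

theorem evalPS_add_eq_evalPS_recenter (hc : PSConvOn c a) {x w : K} (hx : ‖x‖ ≤ a)
    (hw : ‖w‖ ≤ a) : evalPS c (x + w) = evalPS (recenter c x) w := by
  have ha : 0 ≤ a := (norm_nonneg x).trans hx
  set g : ℕ × ℕ → K := fun p => ((p.1 + p.2).choose p.1 : K) * c (p.1 + p.2) * x ^ p.2 * w ^ p.1
  have hg : Tendsto g cofinite (𝓝 0) := by
    refine squeeze_zero_norm (fun p => ?_) (hc.comp tendsto_add_cofinite_atTop)
    simp only [g, Function.comp_apply, norm_mul, norm_pow, pow_add]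
    calc ‖((p.1 + p.2).choose p.1 : K)‖ * ‖c (p.1 + p.2)‖ * ‖x‖ ^ p.2 * ‖w‖ ^ p.1
        ≤ 1 * ‖c (p.1 + p.2)‖ * a ^ p.2 * a ^ p.1 := by
          gcongr
          exact IsUltrametricDist.norm_natCast_le_one K _
      _ = _ := by ring
  have hgs : Summable g := NonarchimedeanAddGroup.summable_of_tendsto_cofinite_zero hg
  have hrow (k : ℕ) : Summable fun j => g (k, j) :=
    NonarchimedeanAddGroup.summable_of_tendsto_cofinite_zero
      (hg.comp (Prod.mk_right_injective k).tendsto_cofinite)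
  calc evalPS c (x + w) = ∑' m, ∑ p ∈ Finset.HasAntidiagonal.antidiagonal m, g p := by
        refine tsum_congr fun m => ?_
        rw [add_comm, (Commute.all w x).add_pow', Finset.mul_sum]
        refine Finset.sum_congr rfl fun p hp => ?_
        rw [← Finset.HasAntidiagonal.mem_antidiagonal.mp hp, nsmul_eq_mul]
        ring
    _ = ∑' p, g p := by
        let e := Finset.HasAntidiagonal.sigmaAntidiagonalEquivProd (A := ℕ)
        have hsig : Summable (g ∘ e) := e.summable_iff.2 hgs
        rw [← e.tsum_eq g]
        exact ((hsig.tsum_sigma' fun m => (hasSum_fintype _).summable).trans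
          (tsum_congr fun m => Finset.tsum_subtype _ g)).symm
    _ = ∑' k, ∑' j, g (k, j) := hgs.tsum_prod' hrow
    _ = evalPS (recenter c x) w := by
        refine tsum_congr fun k => ?_
        rw [recenter, ← tsum_mul_right]

variable (a) in
/-- Functions that agree on the closed disc `‖z‖ ≤ a` with a power series convergent there; their
values off the disc are unconstrained. -/
def psFun : Subring (K → K) where
  carrier := {h | ∃ c : ℕ → K, PSConvOn c a ∧ ∀ z, ‖z‖ ≤ a → h z = evalPS c z}
  zero_mem' := ⟨_, psConvOn_polynomial 0, fun z _ => by rw [evalPS_polynomial]; simp⟩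
  one_mem' := ⟨_, psConvOn_polynomial 1, fun z _ => by rw [evalPS_polynomial]; simp⟩
  add_mem' := by
    rintro _ _ ⟨c, hc, hcz⟩ ⟨d, hd, hdz⟩
    refine ⟨c + d, ?_, fun z hz => ?_⟩
    · rw [psConvOn_iff_isRestricted] at *
      convert PowerSeries.isRestricted.add a hc hd using 1
      ext
      simp
    · simp only [Pi.add_apply, hcz z hz, hdz z hz, evalPS_add hc hd hz]
  neg_mem' := by
    rintro _ ⟨c, hc, hcz⟩
    refine ⟨-c, ?_, fun z hz => ?_⟩
    · rw [psConvOn_iff_isRestricted] at *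
      convert PowerSeries.isRestricted.neg a hc using 1
      ext
      simp
    · simp only [Pi.neg_apply, hcz z hz, evalPS, neg_mul, tsum_neg]
  mul_mem' := by
    rintro _ _ ⟨c, hc, hcz⟩ ⟨d, hd, hdz⟩
    refine ⟨fun m => PowerSeries.coeff m (.mk c * .mk d), ?_, fun z hz => ?_⟩
    · rw [psConvOn_iff_isRestricted] at *
      convert PowerSeries.isRestricted.mul a hc hd using 1
      ext
      simp
    · simp only [Pi.mul_apply, hcz z hz, hdz z hz, evalPS_mul hc hd hz]

variable (a) in
theorem polynomial_eval_mem_psFun (P : Polynomial K) : (fun z => P.eval z) ∈ psFun a :=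
  ⟨_, psConvOn_polynomial P, fun z _ => (evalPS_polynomial P z).symm⟩

theorem const_mem_psFun (c : K) : (fun _ => c) ∈ psFun a := by
  simpa using polynomial_eval_mem_psFun a (Polynomial.C c)

theorem comp_add_mem_psFun (ha : 0 < a) {h : K → K} (hh : h ∈ psFun a) {x : K} (hx : ‖x‖ ≤ a) :
    (fun z => h (z + x)) ∈ psFun a := by
  obtain ⟨c, hc, hcz⟩ := hh
  refine ⟨recenter c x, psConvOn_recenter hc ha hx, fun z hz => ?_⟩
  show h (z + x) = _
  rw [hcz _ (norm_add_le_of_norm_le hz hx), add_comm, evalPS_add_eq_evalPS_recenter hc hx hz]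

end Evaluation

theorem infinite_setOf_norm_le [NontriviallyNormedField K] {a : ℝ} (ha : 0 < a) :
    {z : K | ‖z‖ ≤ a}.Infinite := by
  convert infinite_of_mem_nhds (0 : K) (Metric.closedBall_mem_nhds 0 ha) using 1
  ext
  simp

section Zeros
variable [NontriviallyNormedField K] [IsUltrametricDist K] {a : ℝ} {c : ℕ → K}

theorem PSConvOn.hasFPowerSeriesAt [CompleteSpace K] (hc : PSConvOn c a) (ha : 0 < a) :
    HasFPowerSeriesAt (evalPS c) (FormalMultilinearSeries.ofScalars K c) 0 := by
  set r : NNReal := ⟨a, ha.le⟩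
  have hr : (r : ENNReal) ≤ (FormalMultilinearSeries.ofScalars K c).radius :=
    FormalMultilinearSeries.le_radius_of_tendsto _ (l := 0)
      (by simp only [FormalMultilinearSeries.ofScalars_norm]; exact hc)
  convert ((FormalMultilinearSeries.ofScalars K c).hasFPowerSeriesOnBall
    ((ENNReal.coe_pos.2 (show 0 < r from ha)).trans_le hr)).hasFPowerSeriesAt
  funext z
  simp [evalPS, FormalMultilinearSeries.sum, mul_comm]

theorem PSConvOn.exists_evalPS_ne_zero [CompleteSpace K] (hc : PSConvOn c a) (ha : 0 < a)
    (hc0 : c ≠ 0) : ∃ z, ‖z‖ ≤ a ∧ evalPS c z ≠ 0 := by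
  have hne := (hc.hasFPowerSeriesAt ha).locally_ne_zero
    (by rwa [Ne, FormalMultilinearSeries.ofScalars_series_eq_zero])
  obtain ⟨z, hz, hza⟩ :=
    (hne.and (mem_nhdsWithin_of_mem_nhds (Metric.closedBall_mem_nhds 0 ha))).exists
  exact ⟨z, mem_closedBall_zero_iff.mp hza, hz⟩

variable [ProperSpace K]

theorem eq_zero_of_eq_zero_on_infinite {h : K → K} (hh : h ∈ psFun a) (ha : 0 < a) {S : Set K}
    (hS : S.Infinite) (hSa : ∀ z ∈ S, ‖z‖ ≤ a) (h0 : ∀ z ∈ S, h z = 0) :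
    ∀ z, ‖z‖ ≤ a → h z = 0 := by
  obtain ⟨c, hc, hcz⟩ := hh
  obtain ⟨x, hx, hacc⟩ := hS.exists_accPt_of_subset_isCompact (isCompact_closedBall 0 a)
    fun z hz => mem_closedBall_zero_iff.mpr (hSa z hz)
  rw [mem_closedBall_zero_iff] at hx
  have hd0 : recenter c x = 0 := by
    by_contra hd0
    have hne := (((psConvOn_recenter hc ha hx).hasFPowerSeriesAt ha).comp_sub x).locally_ne_zero
      (by rwa [Ne, FormalMultilinearSeries.ofScalars_series_eq_zero])
    rw [zero_add] at hne
    obtain ⟨y, hyS, hy⟩ := ((accPt_iff_frequently_nhdsNE.mp hacc).and_eventually hne).exists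
    apply hy
    rw [← evalPS_add_eq_evalPS_recenter hc hx (norm_sub_le_of_norm_le (hSa y hyS) hx),
      add_sub_cancel, ← hcz y (hSa y hyS), h0 y hyS]
  intro z hz
  rw [hcz z hz, ← add_sub_cancel x z,
    evalPS_add_eq_evalPS_recenter hc hx (norm_sub_le_of_norm_le hz hx), hd0]
  simp [evalPS]

theorem finite_zeros {h : K → K} (hh : h ∈ psFun a) (ha : 0 < a)
    (h0 : ∃ z, ‖z‖ ≤ a ∧ h z ≠ 0) : {z | ‖z‖ ≤ a ∧ h z = 0}.Finite := by
  by_contra hinf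
  obtain ⟨z₀, hz₀, hne⟩ := h0
  exact hne (eq_zero_of_eq_zero_on_infinite hh ha hinf (fun z hz => hz.1) (fun z hz => hz.2) z₀ hz₀)

theorem eq_zero_of_prod_mul_eq_zero {ι : Type*} (ha : 0 < a) {s : Finset ι} {u : ι → K → K}
    (hu : ∀ i ∈ s, u i ∈ psFun a) (hu0 : ∀ i ∈ s, ∃ z, ‖z‖ ≤ a ∧ u i z ≠ 0)
    {v : K → K} (hv : v ∈ psFun a) (huv : ∀ z, ‖z‖ ≤ a → (∏ i ∈ s, u i z) * v z = 0) :
    ∀ z, ‖z‖ ≤ a → v z = 0 := by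
  have hZ : (⋃ i ∈ s, {z | ‖z‖ ≤ a ∧ u i z = 0}).Finite :=
    s.finite_toSet.biUnion fun i hi => finite_zeros (hu i hi) ha (hu0 i hi)
  refine eq_zero_of_eq_zero_on_infinite hv ha ((infinite_setOf_norm_le ha).sdiff hZ)
    (fun z hz => hz.1) fun z ⟨hz, hzZ⟩ => (mul_eq_zero.mp (huv z hz)).resolve_left ?_
  simp only [Set.mem_iUnion, not_exists] at hzZ
  exact Finset.prod_ne_zero_iff.mpr fun i hi h0 => hzZ i hi ⟨hz, h0⟩

theorem eventually_apply_add_mul_ne_zero [CharZero K] {h : K → K} (hh : h ∈ psFun a)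
    (ha : 0 < a) (h0 : ∃ z, ‖z‖ ≤ a ∧ h z ≠ 0) {x t : K} (hx : ‖x‖ ≤ a) (ht : ‖t‖ ≤ a)
    (ht0 : t ≠ 0) : ∀ᶠ R : ℕ in atTop, h (x + R * t) ≠ 0 := by
  have hinj : Function.Injective fun R : ℕ => x + R * t := fun R R' hR => by
    simpa [ht0] using hR
  rw [← Nat.cofinite_eq_atTop]
  refine ((finite_zeros hh ha h0).preimage hinj.injOn).subset fun R hR => ?_
  exact ⟨norm_add_le_of_norm_le hx (norm_natCast_mul_le ht R), not_not.mp hR⟩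

theorem telescoped_eq (ha : 0 < a) {F G P Q : K → K} (hF : F ∈ psFun a) (hG : G ∈ psFun a)
    (hP : P ∈ psFun a) (hQ : Q ∈ psFun a) (hG0 : ∃ z, ‖z‖ ≤ a ∧ G z ≠ 0) {t : K} (ht : ‖t‖ ≤ a)
    (h : ∀ z, ‖z‖ ≤ a → (F (z + t) * G z - F z * G (z + t)) * P z = G z * G (z + t) * Q z)
    (k : ℕ) (z : K) (hz : ‖z‖ ≤ a) :
    (F (z + k * t) * G z - F z * G (z + k * t)) * ∏ l ∈ Finset.range k, P (z + l * t) =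
      G z * G (z + k * t) * ∑ l ∈ Finset.range k, Q (z + l * t) *
        ∏ l' ∈ (Finset.range k).erase l, P (z + l' * t) := by
  have hshift {H : K → K} (hH : H ∈ psFun a) (l : ℕ) : (fun z => H (z + l * t)) ∈ psFun a :=
    comp_add_mem_psFun ha hH (norm_natCast_mul_le ht l)
  rw [← sub_eq_zero]
  revert z
  refine eq_zero_of_prod_mul_eq_zero ha (s := Finset.range k) (fun l _ => hshift hG l)
    (fun l _ => ?_) ?_ fun z hz => ?_
  · obtain ⟨z₀, hz₀, hG₀⟩ := hG0
    exact ⟨z₀ - l * t, norm_sub_le_of_norm_le hz₀ (norm_natCast_mul_le ht l), by simpa using hG₀⟩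
  · have hPprod (s : Finset ℕ) : (fun z => ∏ l ∈ s, P (z + l * t)) ∈ psFun a :=
      fun_prod_mem _ _ fun l _ => hshift hP l
    exact sub_mem (mul_mem (sub_mem (mul_mem (hshift hF k) hG) (mul_mem hF (hshift hG k)))
      (hPprod _)) (mul_mem (mul_mem hG (hshift hG k))
        (fun_sum_mem _ _ fun l _ => mul_mem (hshift hQ l) (hPprod _)))
  · simpa using prod_mul_telescope_eq_zero (fun l => F (z + l * t)) (fun l => G (z + l * t))
      (fun l => P (z + l * t)) (fun l => Q (z + l * t)) (fun l => by
        simpa [add_mul, add_assoc] using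
          h (z + l * t) (norm_add_le_of_norm_le hz (norm_natCast_mul_le ht l))) k

theorem exists_eq_const_mul_of_shift_eq [CharZero K] (ha : 0 < a) {F G : K → K}
    (hF : F ∈ psFun a) (hG : G ∈ psFun a) (hG0 : ∃ z, ‖z‖ ≤ a ∧ G z ≠ 0) {t : K} (ht : ‖t‖ ≤ a)
    (ht0 : t ≠ 0) (h : ∀ z, ‖z‖ ≤ a → F (z + t) * G z = F z * G (z + t)) :
    ∃ C, ∀ z, ‖z‖ ≤ a → F z = C * G z := by
  obtain ⟨z₁, hz₁, hG₁⟩ := hG0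
  have hk (k : ℕ) : F (z₁ + k * t) * G z₁ - F z₁ * G (z₁ + k * t) = 0 := by
    simpa using telescoped_eq ha hF hG (one_mem _) (zero_mem _) ⟨z₁, hz₁, hG₁⟩ ht
      (fun z hz => by simpa [sub_eq_zero] using h z hz) k z₁ hz₁
  have hinj : Function.Injective fun k : ℕ => z₁ + k * t := fun k k' hkk' => by
    simpa [ht0] using hkk'
  have hW := eq_zero_of_eq_zero_on_infinite (h := fun z => F z * G z₁ - F z₁ * G z)
    (sub_mem (mul_mem hF (const_mem_psFun _)) (mul_mem (const_mem_psFun _) hG)) ha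
    (Set.infinite_range_of_injective hinj)
    (by rintro _ ⟨k, rfl⟩; exact norm_add_le_of_norm_le hz₁ (norm_natCast_mul_le ht k))
    (by rintro _ ⟨k, rfl⟩; linear_combination hk k)
  refine ⟨F z₁ / G z₁, fun z hz => ?_⟩
  field_simp
  linear_combination hW z hz

end Zeros

section PartialFractions
open Polynomial Finset
variable [Field K] (M n : ℕ)

def denomPoly : K[X] := ∏ j ∈ range M, (X + C (j : K)) ^ n

def numerPoly (A : ℕ → ℕ → K) : K[X] :=
  ∑ i ∈ Icc 1 n, ∑ j ∈ range M,
    C (A i j) * (X + C (j : K)) ^ (n - i) * ∏ j' ∈ (range M).erase j, (X + C (j' : K)) ^ n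

variable {M n}

theorem sum_div_pow_mul_denomPoly (A : ℕ → ℕ → K) {z : K} (hz : ∀ j : ℕ, j < M → z + j ≠ 0) :
    (∑ i ∈ Icc 1 n, ∑ j ∈ range M, A i j / (z + j) ^ i) * (denomPoly M n).eval z =
      (numerPoly M n A).eval z := by
  simp only [denomPoly, numerPoly, eval_prod, eval_pow, eval_add, eval_X, eval_C, eval_finsetSum,
    eval_mul, sum_mul]
  refine sum_congr rfl fun i hi => sum_congr rfl fun j hj => ?_
  have hzj := hz j (mem_range.mp hj)
  rw [← mul_prod_erase _ _ hj, ← pow_sub_mul_pow _ (mem_Icc.mp hi).2]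
  field_simp

theorem denomPoly_eval_ne_zero {z : K} (hz : ∀ j : ℕ, j < M → z + j ≠ 0) :
    (denomPoly M n).eval z ≠ 0 := by
  simp only [denomPoly, eval_prod, eval_pow, eval_add, eval_X, eval_C]
  exact prod_ne_zero_iff.mpr fun j hj => pow_ne_zero _ (hz j (mem_range.mp hj))

theorem denomPoly_eval_neg {j : ℕ} (hj : j < M) (hn : n ≠ 0) :
    (denomPoly M n).eval (-j : K) = 0 := by
  simp only [denomPoly, eval_prod, eval_pow, eval_add, eval_X, eval_C]
  exact prod_eq_zero (mem_range.mpr hj) (by simp [hn])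

theorem denomPoly_eval_ne_zero_of_int [CharZero K] {j₀ : ℕ} (hj₀ : j₀ < M) {s : ℤ} (hs : s ≠ 0) :
    (denomPoly M n).eval (-j₀ + s * M : K) ≠ 0 := by
  refine denomPoly_eval_ne_zero fun j hj h0 => ?_
  have hint : (j : ℤ) - j₀ + s * M = 0 := by
    exact_mod_cast (by push_cast; linear_combination h0 : ((j - j₀ + s * M : ℤ) : K) = 0)
  rcases hs.lt_or_gt with hs | hs <;> nlinarith

theorem numerPoly_eval_neg_ne_zero [CharZero K] {A : ℕ → ℕ → K} {j₀ : ℕ} (hj₀ : j₀ < M)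
    (hn : 1 ≤ n) (hA : A n j₀ ≠ 0) : (numerPoly M n A).eval (-j₀ : K) ≠ 0 := by
  have hvanish {j : ℕ} (hj : j ∈ range M) (hjj : j ≠ j₀) :
      ∏ j' ∈ (range M).erase j, (-j₀ + j' : K) ^ n = 0 :=
    prod_eq_zero (mem_erase.mpr ⟨hjj.symm, mem_range.mpr hj₀⟩) (by simp; omega)
  simp only [numerPoly, eval_prod, eval_pow, eval_add, eval_X, eval_C, eval_finsetSum, eval_mul]
  rw [sum_eq_single_of_mem n (mem_Icc.mpr ⟨hn, le_rfl⟩),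
    sum_eq_single_of_mem j₀ (mem_range.mpr hj₀)]
  · simp only [Nat.sub_self, pow_zero, mul_one]
    refine mul_ne_zero hA (prod_ne_zero_iff.mpr fun j hj => pow_ne_zero _ ?_)
    rw [neg_add_eq_sub, sub_ne_zero, Ne, Nat.cast_inj]
    exact (mem_erase.mp hj).1
  · intro j hj hjj
    rw [hvanish hj hjj, mul_zero]
  · intro i hi hin
    refine sum_eq_zero fun j hj => ?_
    rcases eq_or_ne j j₀ with rfl | hjj
    · rw [neg_add_cancel, zero_pow (by have := (mem_Icc.mp hi).2; omega), mul_zero, zero_mul]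
    · rw [hvanish hj hjj, mul_zero]

end PartialFractions

section QuotientDifference
open Finset
variable [NontriviallyNormedField K] [IsUltrametricDist K] [ProperSpace K] {a : ℝ}
  {F G : K → K} {M : ℕ} {S : Set K}

theorem cleared_eq_of_eq_on_infinite (ha : 0 < a) (hF : F ∈ psFun a) (hG : G ∈ psFun a)
    (hM : ‖(M : K)‖ ≤ a) (hS : S.Infinite) (hSa : ∀ z ∈ S, ‖z‖ ≤ a)
    (hdef : ∀ z ∈ S, G z ≠ 0 ∧ G (z + M) ≠ 0 ∧ ∀ j : ℕ, j < M → z + j ≠ 0)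
    {n : ℕ} {A : ℕ → ℕ → K}
    (heq : ∀ z ∈ S, F (z + M) / G (z + M) - F z / G z =
      ∑ i ∈ Icc 1 n, ∑ j ∈ range M, A i j / (z + j) ^ i) (z : K) (hz : ‖z‖ ≤ a) :
    (F (z + M) * G z - F z * G (z + M)) * (denomPoly M n).eval z =
      G z * G (z + M) * (numerPoly M n A).eval z := by
  rw [← sub_eq_zero]
  revert z
  refine eq_zero_of_eq_zero_on_infinite ?_ ha hS hSa fun z hzS => ?_
  · have hshift {H : K → K} (hH : H ∈ psFun a) := comp_add_mem_psFun ha hH hM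
    exact sub_mem (mul_mem (sub_mem (mul_mem (hshift hF) hG) (mul_mem hF (hshift hG)))
      (polynomial_eval_mem_psFun a _))
      (mul_mem (mul_mem hG (hshift hG)) (polynomial_eval_mem_psFun a _))
  · obtain ⟨hGz, hGzM, hzj⟩ := hdef z hzS
    rw [← sum_div_pow_mul_denomPoly A hzj, ← heq z hzS]
    field_simp
    ring

theorem top_coeff_eq_zero [CharZero K] (ha : 1 ≤ a) (hF : F ∈ psFun a) (hG : G ∈ psFun a)
    (hG0 : ∃ z, ‖z‖ ≤ a ∧ G z ≠ 0) (hM : 1 ≤ M) {n : ℕ} (hn : 1 ≤ n) {A : ℕ → ℕ → K}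
    (h : ∀ z, ‖z‖ ≤ a → (F (z + M) * G z - F z * G (z + M)) * (denomPoly M n).eval z =
      G z * G (z + M) * (numerPoly M n A).eval z) :
    ∀ j ∈ range M, A n j = 0 := by
  intro j₀ hj₀
  rw [mem_range] at hj₀
  by_contra hA
  have ha0 : 0 < a := by linarith
  have hnat (m : ℕ) : ‖(m : K)‖ ≤ a := (IsUltrametricDist.norm_natCast_le_one K m).trans ha
  have hnegM : ‖-(M : K)‖ ≤ a := by rw [norm_neg]; exact hnat M
  have hMK : (M : K) ≠ 0 := by exact_mod_cast (by omega : M ≠ 0)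
  have hj₀a : ‖(-j₀ : K)‖ ≤ a := by rw [norm_neg]; exact hnat j₀
  obtain ⟨R, hR, hGneg, hGpos⟩ : ∃ R : ℕ, 1 ≤ R ∧ G (-j₀ + R * -M) ≠ 0 ∧ G (-j₀ + R * M) ≠ 0 :=
    ((eventually_ge_atTop 1).and
      ((eventually_apply_add_mul_ne_zero hG ha0 hG0 hj₀a hnegM (neg_ne_zero.mpr hMK)).and
      (eventually_apply_add_mul_ne_zero hG ha0 hG0 hj₀a (hnat M) hMK))).exists
  -- In the `2R`-step identity at `w = -j₀ - RM`, the factor `l = R` puts the pole `-j₀` on the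
  -- left, which therefore vanishes, while on the right only the term `l = R` survives.
  set w : K := -j₀ + R * -M
  have hw : ‖w‖ ≤ a := norm_add_le_of_norm_le hj₀a (norm_natCast_mul_le hnegM R)
  have hR2 : R ∈ range (2 * R) := mem_range.mpr (by omega)
  have hPR : (denomPoly M n).eval (w + R * M) = 0 := by
    rw [show w + R * M = -j₀ by ring]
    exact denomPoly_eval_neg hj₀ (by omega)
  have key := telescoped_eq ha0 hF hG (polynomial_eval_mem_psFun a _)
    (polynomial_eval_mem_psFun a _) hG0 (hnat M) h (2 * R) w hw
  rw [prod_eq_zero hR2 hPR, mul_zero, sum_eq_single_of_mem R hR2 fun l _ hl => by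
    rw [prod_eq_zero (mem_erase.mpr ⟨hl.symm, hR2⟩) hPR, mul_zero]] at key
  refine mul_ne_zero (mul_ne_zero hGneg ?_)
    (mul_ne_zero ?_ (prod_ne_zero_iff.mpr fun l hl => ?_)) key.symm
  · rwa [show w + ((2 * R : ℕ) : K) * M = -j₀ + R * M by push_cast; ring]
  · rw [show w + R * M = -j₀ by ring]
    exact numerPoly_eval_neg_ne_zero hj₀ hn hA
  · rw [show w + l * M = -j₀ + ((l - R : ℤ) : K) * M by push_cast; ring]
    exact denomPoly_eval_ne_zero_of_int hj₀
      (sub_ne_zero.mpr (by exact_mod_cast (mem_erase.mp hl).1))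

theorem partialFraction_coeff_eq_zero [CharZero K] (ha : 1 ≤ a) (hF : F ∈ psFun a)
    (hG : G ∈ psFun a) (hG0 : ∃ z, ‖z‖ ≤ a ∧ G z ≠ 0) (hM : 1 ≤ M) (hS : S.Infinite)
    (hSa : ∀ z ∈ S, ‖z‖ ≤ a)
    (hdef : ∀ z ∈ S, G z ≠ 0 ∧ G (z + M) ≠ 0 ∧ ∀ j : ℕ, j < M → z + j ≠ 0)
    (A : ℕ → ℕ → K) (n : ℕ)
    (heq : ∀ z ∈ S, F (z + M) / G (z + M) - F z / G z =
      ∑ i ∈ Icc 1 n, ∑ j ∈ range M, A i j / (z + j) ^ i) :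
    ∀ i ∈ Icc 1 n, ∀ j ∈ range M, A i j = 0 := by
  have hMa : ‖(M : K)‖ ≤ a := (IsUltrametricDist.norm_natCast_le_one K M).trans ha
  induction n with
  | zero => simp
  | succ n ih =>
    have htop := top_coeff_eq_zero ha hF hG hG0 hM (by omega)
      (cleared_eq_of_eq_on_infinite (by linarith) hF hG hMa hS hSa hdef heq)
    have ih' := ih fun z hz => by
      have htop_sum : ∑ j ∈ range M, A (n + 1) j / (z + j) ^ (n + 1) = 0 :=
        sum_eq_zero fun j hj => by rw [htop j hj, zero_div]
      rw [heq z hz, sum_Icc_succ_top (by omega), htop_sum, add_zero]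
    intro i hi
    rcases (mem_Icc.mp hi).2.lt_or_eq with hlt | rfl
    · exact ih' i (mem_Icc.mpr ⟨(mem_Icc.mp hi).1, by omega⟩)
    · exact htop

end QuotientDifference

theorem module_finite_of_adjoin_eq_top {F L : Type*} [Field F] [Field L] [Algebra F L] {ζ : L}
    {M : ℕ} (hζ : IsPrimitiveRoot ζ M) (hM : 0 < M) (hgen : Algebra.adjoin F {ζ} = ⊤) :
    Module.Finite F L := by
  have hfg := ((hζ.isIntegral hM).tower_top (A := F)).fg_adjoin_singleton
  rw [hgen, Algebra.top_toSubmodule] at hfg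
  exact ⟨hfg⟩

section PadicExtension
variable {p : ℕ} [Fact p.Prime] [NormedField K] [Algebra ℚ_[p] K]

theorem isUltrametricDist_of_norm_algebraMap
    (hiso : ∀ x : ℚ_[p], ‖algebraMap ℚ_[p] K x‖ = ‖x‖) : IsUltrametricDist K :=
  IsUltrametricDist.isUltrametricDist_of_forall_norm_natCast_le_one fun m => by
    rw [← map_natCast (algebraMap ℚ_[p] K), hiso]
    exact IsUltrametricDist.norm_natCast_le_one ℚ_[p] m

abbrev nontriviallyNormedFieldOfNormAlgebraMap
    (hiso : ∀ x : ℚ_[p], ‖algebraMap ℚ_[p] K x‖ = ‖x‖) : NontriviallyNormedField K :=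
  .ofNormNeOne ⟨algebraMap ℚ_[p] K p,
    (map_ne_zero _).mpr (Nat.cast_ne_zero.mpr (Fact.out : p.Prime).ne_zero), by
    rw [hiso, Padic.norm_p]
    exact inv_ne_one.mpr (by exact_mod_cast (Fact.out : p.Prime).ne_one)⟩

theorem properSpace_of_norm_algebraMap [Module.Finite ℚ_[p] K]
    (hiso : ∀ x : ℚ_[p], ‖algebraMap ℚ_[p] K x‖ = ‖x‖) : ProperSpace K :=
  letI : NormedSpace ℚ_[p] K := ⟨fun x y => by rw [Algebra.smul_def, norm_mul, hiso]⟩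
  FiniteDimensional.proper ℚ_[p] K

end PadicExtension

theorem quotient_difference_lemma_general (p M : ℕ) [Fact p.Prime] (hM : 1 ≤ M)
    [NormedField K] [Algebra ℚ_[p] K]
    (hiso : ∀ x : ℚ_[p], ‖algebraMap ℚ_[p] K x‖ = ‖x‖)
    (ζ : K) (hζ : IsPrimitiveRoot ζ M) (hgen : Algebra.adjoin ℚ_[p] {ζ} = ⊤)
    (a : ℝ) (ha : 1 < a) (f g : ℕ → K) (hf : PSConvOn f a) (hg : PSConvOn g a)
    (hg0 : ∃ m, g m ≠ 0) (n : ℕ) (A : ℕ → ℕ → K) (S : Set K)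
    (hSinf : S.Infinite) (hSa : ∀ z ∈ S, ‖z‖ ≤ a)
    (hdef : ∀ z ∈ S, evalPS g z ≠ 0 ∧ evalPS g (z + (M : K)) ≠ 0 ∧
      ∀ j : ℕ, j < M → z + (j : K) ≠ 0)
    (heq : ∀ z ∈ S,
      evalPS f (z + (M : K)) / evalPS g (z + (M : K)) - evalPS f z / evalPS g z =
        ∑ i ∈ Finset.Icc 1 n, ∑ j ∈ Finset.range M, A i j / (z + (j : K)) ^ i) :
    (∀ i ∈ Finset.Icc 1 n, ∀ j ∈ Finset.range M, A i j = 0) ∧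
    ∃ C : K, ∀ z : K, ‖z‖ ≤ a → evalPS g z ≠ 0 → evalPS f z = C * evalPS g z := by
  have : CharZero K := charZero_of_injective_algebraMap (algebraMap ℚ_[p] K).injective
  have := isUltrametricDist_of_norm_algebraMap hiso
  let := nontriviallyNormedFieldOfNormAlgebraMap hiso
  have := module_finite_of_adjoin_eq_top hζ (by omega) hgen
  have := properSpace_of_norm_algebraMap hiso
  have ha0 : 0 < a := by linarith
  have hMa : ‖(M : K)‖ ≤ a := (IsUltrametricDist.norm_natCast_le_one K M).trans ha.le
  have hF : evalPS f ∈ psFun a := ⟨f, hf, fun _ _ => rfl⟩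
  have hG : evalPS g ∈ psFun a := ⟨g, hg, fun _ _ => rfl⟩
  have hG0 : ∃ z, ‖z‖ ≤ a ∧ evalPS g z ≠ 0 :=
    hg.exists_evalPS_ne_zero ha0 fun h => hg0.elim fun m hm => hm (congrFun h m)
  have hA := partialFraction_coeff_eq_zero ha.le hF hG hG0 hM hSinf hSa hdef A n heq
  -- For `n = 0` the cleared identity has `denomPoly M 0 = 1` and `numerPoly M 0 A = 0`.
  have hperiodic := cleared_eq_of_eq_on_infinite (n := 0) (A := A) ha0 hF hG hMa hSinf hSa hdef
    fun z hz => by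
      rw [heq z hz]
      exact Finset.sum_eq_zero fun i hi => Finset.sum_eq_zero fun j hj => by
        rw [hA i hi j hj, zero_div]
  obtain ⟨C, hC⟩ := exists_eq_const_mul_of_shift_eq ha0 hF hG hG0 hMa
    (by exact_mod_cast (by omega : M ≠ 0))
    fun z hz => by simpa [denomPoly, numerPoly, sub_eq_zero] using hperiodic z hz
  exact ⟨hA, C, fun z hz _ => hC z hz⟩

/-- if `f, g` are power series convergent on the closed disc `D(a)` with `a > 1`,
`g ≠ 0`, and `f/g (z+M) - f/g (z) = ∑_{1≤i≤n, 0≤j<M} a_{ij}/(z+j)^i` for infinitely many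
`z ∈ D(a)` where all terms are defined, then all `a_{ij} = 0` and `f/g` is constant. -/
theorem quotient_difference_lemma (p M : ℕ) [Fact p.Prime] (hM : 1 ≤ M) (hpM : ¬ p ∣ M)
    [NormedField K] [CompleteSpace K] [Algebra ℚ_[p] K]
    (hiso : ∀ x : ℚ_[p], ‖algebraMap ℚ_[p] K x‖ = ‖x‖)
    (ζ : K) (hζ : IsPrimitiveRoot ζ M) (hgen : Algebra.adjoin ℚ_[p] {ζ} = ⊤)
    (a : ℝ) (ha : 1 < a) (f g : ℕ → K) (hf : PSConvOn f a) (hg : PSConvOn g a)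
    (hg0 : ∃ m, g m ≠ 0) (n : ℕ) (hn : 1 ≤ n) (A : ℕ → ℕ → K) (S : Set K)
    (hSinf : S.Infinite) (hSa : ∀ z ∈ S, ‖z‖ ≤ a)
    (hdef : ∀ z ∈ S, evalPS g z ≠ 0 ∧ evalPS g (z + (M : K)) ≠ 0 ∧
      ∀ j : ℕ, j < M → z + (j : K) ≠ 0)
    (heq : ∀ z ∈ S,
      evalPS f (z + (M : K)) / evalPS g (z + (M : K)) - evalPS f z / evalPS g z =
        ∑ i ∈ Finset.Icc 1 n, ∑ j ∈ Finset.range M, A i j / (z + (j : K)) ^ i) :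
    (∀ i ∈ Finset.Icc 1 n, ∀ j ∈ Finset.range M, A i j = 0) ∧
    ∃ C : K, ∀ z : K, ‖z‖ ≤ a → evalPS g z ≠ 0 → evalPS f z = C * evalPS g z :=
  quotient_difference_lemma_general p M hM hiso ζ hζ hgen a ha f g hf hg hg0 n A S hSinf hSa hdef
    heq
end
end

section
/- Fix tuples s = (s_1,…,s_k) of non-negative integers and i = (i_1,…,i_k) with 0 ≤ i_j < M (k ≥ 0 arbitrary), and fix integers t ≥ 1 and 0 ≤ l < M. Then the function ℕ → K sending n to Σ_{0 < a < n, p | a, M | (a−l)} (1/a^t)·σ_p(s;i)(a) is a K-linear combination of the M functions σ_p((s_1,…,s_k,t);(i_1,…,i_k,j)) for 0 ≤ j < M. -/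
open Filter

noncomputable section

variable {K : Type*}

open scoped Classical in
/-- The cyclotomic `p`-adic iterated sum series `σ(s;i;m)(n)`: the sum of
`ζ^(i₁n₁+⋯+iₖnₖ)/(n₁^{s₁}⋯nₖ^{sₖ})` over all tuples `0 < n₁ < ⋯ < nₖ < n`
with `p ∣ nⱼ - mⱼ` for every `j`. -/
def cycSum (p : ℕ) [Field K] (ζ : K) {k : ℕ} (s i m : Fin k → ℕ) (n : ℕ) : K :=
  ∑ t ∈ (Fintype.piFinset fun _ : Fin k => Finset.Ioo 0 n).filter
      (fun t : Fin k → ℕ => StrictMono t ∧ ∀ j, (p : ℤ) ∣ ((t j : ℤ) - (m j : ℤ))),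
    ∏ j, ζ ^ (i j * t j) / (t j : K) ^ (s j)

/-- `σ_p(s;i) = σ(s;i;0)`. -/
def sigmaP (p : ℕ) [Field K] (ζ : K) {k : ℕ} (s i : Fin k → ℕ) : ℕ → K :=
  cycSum p ζ s i fun _ => 0

/-- The index set of all pairs of tuples `(s, i)` with `s` a tuple of naturals and
`i` a tuple of residues mod `M`, of a common length `k ≥ 0`. -/
def SIdx (M : ℕ) : Type := Σ k : ℕ, (Fin k → ℕ) × (Fin k → Fin M)

/-- The function `σ_p(s;i)` attached to an index `u = (s, i)`. -/
def sigmaPIdx (p M : ℕ) [Field K] (ζ : K) (u : SIdx M) : ℕ → K :=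
  sigmaP p ζ u.2.1 fun j => ((u.2.2 j : ℕ))

/-- `t ≤ s` for tuples: there is a strictly increasing reindexing `j` with `tₐ ≤ s_{j(a)}`. -/
def TupleLE {l k : ℕ} (t : Fin l → ℕ) (s : Fin k → ℕ) : Prop :=
  ∃ j : Fin l → Fin k, StrictMono j ∧ ∀ a, t a ≤ s (j a)

/-!
Splitting off the last summation variable gives
`σ_p((s,t);(i,j))(n) = ∑_{0<a<n, p∣a} ζ^{ja} a^{-t} σ_p(s;i)(a)`.
The condition `M ∣ a - l` is then cut out by orthogonality of the characters `a ↦ ζ^{ja}` of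
`ℤ/M`: `(1/M) ∑_j ζ^{-jl} ζ^{ja}` is `1` if `M ∣ a - l` and `0` otherwise.
-/

open Finset

theorem Fin.strictMono_snoc_iff {α : Type*} [Preorder α] {k : ℕ} {x : Fin k → α} {a : α} :
    StrictMono (Fin.snoc x a : Fin (k + 1) → α) ↔ StrictMono x ∧ ∀ j, x j < a := by
  refine ⟨fun h => ⟨fun j j' hjj' => ?_, fun j => ?_⟩, fun ⟨hx, ha⟩ j j' hjj' => ?_⟩
  · simpa using h (Fin.castSucc_lt_castSucc_iff.mpr hjj')
  · simpa using h (Fin.castSucc_lt_last j)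
  · obtain ⟨j, rfl⟩ := Fin.exists_castSucc_eq.mpr (Fin.ne_last_of_lt hjj')
    induction j' using Fin.lastCases with
    | last => simpa using ha j
    | cast j' => simpa using hx (Fin.castSucc_lt_castSucc_iff.mp hjj')

section CycSum

variable [Field K] (p : ℕ) (ζ : K)

open scoped Classical in
def cycIdx {k : ℕ} (m : Fin k → ℕ) (n : ℕ) : Finset (Fin k → ℕ) :=
  (Fintype.piFinset fun _ : Fin k => Ioo 0 n).filter
    (fun t : Fin k → ℕ => StrictMono t ∧ ∀ j, (p : ℤ) ∣ ((t j : ℤ) - (m j : ℤ)))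

theorem cycSum_eq_sum_cycIdx {k : ℕ} (s i m : Fin k → ℕ) (n : ℕ) :
    cycSum p ζ s i m n = ∑ t ∈ cycIdx p m n, ∏ j, ζ ^ (i j * t j) / (t j : K) ^ (s j) :=
  rfl

theorem mem_cycIdx {k : ℕ} {m t : Fin k → ℕ} {n : ℕ} :
    t ∈ cycIdx p m n ↔
      (∀ j, t j ∈ Ioo 0 n) ∧ StrictMono t ∧ ∀ j, (p : ℤ) ∣ ((t j : ℤ) - (m j : ℤ)) := by
  simp [cycIdx]

theorem snoc_mem_cycIdx_iff {k : ℕ} {m x : Fin k → ℕ} {r a n : ℕ} :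
    (Fin.snoc x a : Fin (k + 1) → ℕ) ∈ cycIdx p (Fin.snoc m r) n ↔
      (a ∈ Ioo 0 n ∧ (p : ℤ) ∣ (a : ℤ) - r) ∧ x ∈ cycIdx p m a := by
  simp only [mem_cycIdx, Fin.forall_fin_succ', Fin.snoc_castSucc, Fin.snoc_last,
    Fin.strictMono_snoc_iff, mem_Ioo]
  constructor
  · rintro ⟨⟨hx, ha⟩, ⟨hmono, hlt⟩, hdx, hda⟩
    exact ⟨⟨ha, hda⟩, fun j => ⟨(hx j).1, hlt j⟩, hmono, hdx⟩
  · rintro ⟨⟨ha, hda⟩, hx, hmono, hdx⟩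
    exact ⟨⟨fun j => ⟨(hx j).1, (hx j).2.trans ha.2⟩, ha⟩, ⟨hmono, fun j => (hx j).2⟩, hdx, hda⟩

theorem cycSum_snoc {k : ℕ} (s i m : Fin k → ℕ) (t j r n : ℕ) :
    cycSum p ζ (Fin.snoc s t) (Fin.snoc i j) (Fin.snoc m r) n =
      ∑ a ∈ (Ioo 0 n).filter (fun a : ℕ => (p : ℤ) ∣ (a : ℤ) - r),
        ζ ^ (j * a) / (a : K) ^ t * cycSum p ζ s i m a := by
  simp_rw [cycSum_eq_sum_cycIdx, mul_sum]
  rw [sum_sigma']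
  refine sum_nbij' (fun u => ⟨u (Fin.last k), Fin.init u⟩) (fun x => Fin.snoc x.2 x.1)
    (fun u hu => ?_) (fun x hx => ?_) (fun u _ => Fin.snoc_init_self u)
    (fun x _ => by simp) (fun u _ => ?_)
  · rw [← Fin.snoc_init_self u, snoc_mem_cycIdx_iff] at hu
    simpa using hu
  · simpa [snoc_mem_cycIdx_iff] using hx
  · rw [Fin.prod_univ_castSucc, mul_comm]
    simp [Fin.init]

theorem sigmaP_snoc {k : ℕ} (s i : Fin k → ℕ) (t j n : ℕ) :
    sigmaP p ζ (Fin.snoc s t) (Fin.snoc i j) n =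
      ∑ a ∈ (Ioo 0 n).filter (p ∣ ·), ζ ^ (j * a) / (a : K) ^ t * sigmaP p ζ s i a := by
  have hzero : (Fin.snoc (fun _ => 0) 0 : Fin (k + 1) → ℕ) = fun _ => 0 := by
    ext b; induction b using Fin.lastCases <;> simp
  simp only [sigmaP, ← hzero, cycSum_snoc, sub_zero, Nat.cast_zero, Int.natCast_dvd_natCast]

end CycSum

theorem IsPrimitiveRoot.sum_zpow_mul_eq_ite [Field K] {ζ : K} {M : ℕ} (hζ : IsPrimitiveRoot ζ M)
    (a : ℤ) : ∑ j ∈ range M, ζ ^ ((j : ℤ) * a) = if (M : ℤ) ∣ a then (M : K) else 0 := by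
  have hpow : ∀ j : ℕ, ζ ^ ((j : ℤ) * a) = (ζ ^ a) ^ j := fun j => by
    rw [mul_comm, zpow_mul, zpow_natCast]
  simp_rw [hpow]
  split_ifs with hdvd
  · simp [(hζ.zpow_eq_one_iff_dvd a).mpr hdvd]
  · have hne : ζ ^ a ≠ 1 := fun h => hdvd ((hζ.zpow_eq_one_iff_dvd a).mp h)
    rw [geom_sum_eq hne, ← zpow_natCast, ← zpow_mul, mul_comm, zpow_mul, zpow_natCast,
      hζ.pow_eq_one, one_zpow, sub_self, zero_div]

theorem IsPrimitiveRoot.sum_zpow_neg_mul_pow_mul_eq_ite [Field K] {ζ : K} {M : ℕ} [NeZero M]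
    (hζ : IsPrimitiveRoot ζ M) (l a : ℕ) :
    ∑ j : Fin M, ζ ^ (-((j : ℤ) * l)) / M * ζ ^ ((j : ℕ) * a) =
      if (M : ℤ) ∣ (a : ℤ) - l then 1 else 0 := by
  have hMK : (M : K) ≠ 0 := hζ.neZero'.out
  have hζ0 : ζ ≠ 0 := hζ.ne_zero (NeZero.ne M)
  have hterm : ∀ j : ℕ, ζ ^ (-((j : ℤ) * l)) / M * ζ ^ (j * a) = ζ ^ ((j : ℤ) * (a - l)) / M := by
    intro j
    rw [div_mul_eq_mul_div, ← zpow_natCast, ← zpow_add₀ hζ0]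
    push_cast
    ring_nf
  rw [Fin.sum_univ_eq_sum_range (fun j => ζ ^ (-((j : ℤ) * l)) / M * ζ ^ (j * a))]
  simp_rw [hterm, ← sum_div, hζ.sum_zpow_mul_eq_ite]
  split_ifs <;> simp [hMK]

open scoped Classical in
theorem sum_residue_class_isCombination_general (p M : ℕ) (hM : 1 ≤ M) [NormedField K]
    (ζ : K) (hζ : IsPrimitiveRoot ζ M) (k : ℕ) (s i : Fin k → ℕ) (t : ℕ) (l : ℕ) :
    ∃ c : Fin M → K, ∀ n : ℕ,
      (∑ a ∈ (Finset.Ioo 0 n).filter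
          (fun a => p ∣ a ∧ (M : ℤ) ∣ ((a : ℤ) - (l : ℤ))),
        (1 / (a : K) ^ t) * sigmaP p ζ s i a) =
      ∑ j : Fin M, c j * sigmaP p ζ (Fin.snoc s t) (Fin.snoc i (j : ℕ)) n := by
  have : NeZero M := ⟨by omega⟩
  refine ⟨fun j => ζ ^ (-((j : ℤ) * l)) / M, fun n => ?_⟩
  symm
  calc ∑ j : Fin M, ζ ^ (-((j : ℤ) * l)) / M * sigmaP p ζ (Fin.snoc s t) (Fin.snoc i j) n
      = ∑ a ∈ (Ioo 0 n).filter (p ∣ ·),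
          (∑ j : Fin M, ζ ^ (-((j : ℤ) * l)) / M * ζ ^ ((j : ℕ) * a)) *
            (1 / (a : K) ^ t * sigmaP p ζ s i a) := by
        simp_rw [sigmaP_snoc, mul_sum, sum_mul]
        rw [sum_comm]
        refine sum_congr rfl fun a _ => sum_congr rfl fun j _ => by ring
    _ = ∑ a ∈ (Ioo 0 n).filter (p ∣ ·),
          if (M : ℤ) ∣ (a : ℤ) - l then 1 / (a : K) ^ t * sigmaP p ζ s i a else 0 := by
        simp_rw [hζ.sum_zpow_neg_mul_pow_mul_eq_ite, ite_mul, one_mul, zero_mul]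
    _ = _ := by rw [← sum_filter, filter_filter]

open scoped Classical in
/-- for `t ≥ 1` and `0 ≤ l < M`, the function
`n ↦ ∑_{0<a<n, p∣a, M∣(a-l)} (1/a^t) σ_p(s;i)(a)` is a `K`-linear combination of the `M`
functions `σ_p((s,t);(i,j))` for `0 ≤ j < M`. -/
theorem sum_residue_class_isCombination (p M : ℕ) [Fact p.Prime] (hM : 1 ≤ M) (hpM : ¬ p ∣ M)
    [NormedField K] [CompleteSpace K] [Algebra ℚ_[p] K]
    (hiso : ∀ x : ℚ_[p], ‖algebraMap ℚ_[p] K x‖ = ‖x‖)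
    (ζ : K) (hζ : IsPrimitiveRoot ζ M) (hgen : Algebra.adjoin ℚ_[p] {ζ} = ⊤)
    (k : ℕ) (s i : Fin k → ℕ) (hi : ∀ b, i b < M)
    (t : ℕ) (ht : 1 ≤ t) (l : ℕ) (hl : l < M) :
    ∃ c : Fin M → K, ∀ n : ℕ,
      (∑ a ∈ (Finset.Ioo 0 n).filter
          (fun a => p ∣ a ∧ (M : ℤ) ∣ ((a : ℤ) - (l : ℤ))),
        (1 / (a : K) ^ t) * sigmaP p ζ s i a) =
      ∑ j : Fin M, c j * sigmaP p ζ (Fin.snoc s t) (Fin.snoc i (j : ℕ)) n :=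
  sum_residue_class_isCombination_general p M hM ζ hζ k s i t l

end
end
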